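/- arXiv:1103.3576 — 4 statements merged into one kernel-verified Lean document; each statement's English description precedes it below -/
import Mathlib

section
/- For irrational β > 2 and α = β/(β-1), for all nonnegative integers m ≠ n, we have ⌊mα⌋ ≠ ⌊nα⌋, ⌊mβ⌋ ≠ ⌊nβ⌋, and for all positive m, n, ⌊mα⌋ ≠ ⌊nβ⌋. -/
/-! Multiplication by `r ≥ 1` separates distinct naturals by at least `1`, so each Beatty sequence
is injective. For disjointness, `1/β + 1/α = 1`, so by Rayleigh's theorem the positive terms of the
two Beatty sequences partition the positive integers; a common value would be a positive integer
lying in both parts. -/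

open scoped symmDiff

theorem strictMono_floor_natCast_mul {K : Type*} [Field K] [LinearOrder K] [IsStrictOrderedRing K]
    [FloorRing K] {r : K} (hr : 1 ≤ r) : StrictMono fun n : ℕ => ⌊(n : K) * r⌋ := by
  intro m n hmn
  have hgap : (m : K) * r + 1 ≤ (n : K) * r := by
    have : (m : K) + 1 ≤ n := by exact_mod_cast hmn
    nlinarith
  calc ⌊(m : K) * r⌋ < ⌊(m : K) * r + 1⌋ := by rw [Int.floor_add_one]; omega
    _ ≤ ⌊(n : K) * r⌋ := Int.floor_le_floor hgap

theorem Irrational.beattySeq_ne_beattySeq {r s : ℝ} (hrs : r.HolderConjugate s) (hr : Irrational r)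
    {k m : ℤ} (hk : 0 < k) (hm : 0 < m) : beattySeq r k ≠ beattySeq s m := by
  intro heq
  have hpos : beattySeq r k ∈ {n : ℤ | 0 < n} :=
    Int.floor_pos.2 (one_le_mul_of_one_le_of_one_le (by exact_mod_cast hk) hrs.lt.le)
  rw [← hr.beattySeq_symmDiff_beattySeq_pos hrs, Set.mem_symmDiff] at hpos
  rcases hpos with ⟨-, hnot⟩ | ⟨-, hnot⟩
  · exact hnot ⟨m, hm, heq.symm⟩
  · exact hnot ⟨k, hk, rfl⟩

theorem stmt_6 (β : ℝ) (hirr : Irrational β) (hβ : 2 < β)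
    (α : ℝ) (hα : α = β / (β - 1)) :
    (∀ m n : ℕ, m ≠ n → ⌊(m : ℝ) * α⌋ ≠ ⌊(n : ℝ) * α⌋) ∧
    (∀ m n : ℕ, m ≠ n → ⌊(m : ℝ) * β⌋ ≠ ⌊(n : ℝ) * β⌋) ∧
    (∀ m n : ℕ, 0 < m → 0 < n → ⌊(m : ℝ) * α⌋ ≠ ⌊(n : ℝ) * β⌋) := by
  have hconj : β.HolderConjugate α :=
    (Real.holderConjugate_iff_eq_conjExponent (by linarith)).2 hα
  refine ⟨fun m n => (strictMono_floor_natCast_mul hconj.symm.lt.le).injective.ne,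
    fun m n => (strictMono_floor_natCast_mul hconj.lt.le).injective.ne, fun m n hm hn h => ?_⟩
  exact hirr.beattySeq_ne_beattySeq hconj (Int.natCast_pos.2 hn) (Int.natCast_pos.2 hm)
    (by simpa [beattySeq] using h.symm)
end

section
/- For irrational β > 2 and α = β/(β-1), no Nim-type move (decreasing exactly one coordinate by a positive amount) maps a pair (⌊nα⌋, ⌊nβ⌋) to a pair of the form (⌊mα⌋, ⌊mβ⌋) or (⌊mβ⌋, ⌊mα⌋) for nonnegative integers m, n. -/
/-!
If a move lands on `(⌊mα⌋, ⌊mβ⌋)`, the untouched coordinate forces `m = n`, because `k ↦ ⌊kγ⌋`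
is strictly increasing for `γ ≥ 1`. If it lands on `(⌊mβ⌋, ⌊mα⌋)` by lowering the first
coordinate, then `⌊mβ⌋ < ⌊nα⌋ ≤ ⌊nβ⌋ = ⌊mα⌋ ≤ ⌊mβ⌋`, as `α ≤ β`. If it lowers the second one,
then `⌊nα⌋ = ⌊mβ⌋`; since `1/α + 1/β = 1` and `β` is irrational, Rayleigh's theorem says the two
Beatty sequences meet only at `0`, so `m = n = 0`, and from `(0, 0)` there is no move.
-/

theorem strictMono_floor_natCast_mul_s7 {γ : ℝ} (hγ : 1 ≤ γ) :
    StrictMono fun n : ℕ => ⌊(n : ℝ) * γ⌋ := by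
  intro a b hab
  have hab' : (a : ℝ) + 1 ≤ b := by exact_mod_cast hab
  calc ⌊(a : ℝ) * γ⌋ < ⌊(a : ℝ) * γ⌋ + 1 := Int.lt_succ _
    _ = ⌊(a : ℝ) * γ + 1⌋ := (Int.floor_add_one _).symm
    _ ≤ ⌊(b : ℝ) * γ⌋ := Int.floor_le_floor (by nlinarith)

theorem Irrational.beattySeq'_eq_beattySeq {s : ℝ} (hs : Irrational s) {k : ℤ} (hk : k ≠ 0) :
    beattySeq' s k = beattySeq s k := by
  rw [beattySeq', beattySeq, sub_eq_iff_eq_add, Int.ceil_eq_iff, Int.cast_add, Int.cast_one,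
    add_sub_cancel_right]
  exact ⟨(Int.floor_le _).lt_of_ne fun h ↦ (hs.intCast_mul hk).ne_int _ h.symm,
    (Int.lt_floor_add_one _).le⟩

theorem Real.HolderConjugate.floor_natCast_mul_eq_floor_natCast_mul {r s : ℝ}
    (hrs : r.HolderConjugate s) (hs : Irrational s) {n m : ℕ}
    (h : ⌊(n : ℝ) * r⌋ = ⌊(m : ℝ) * s⌋) : n = 0 ∧ m = 0 := by
  have hm : m = 0 := by
    by_contra hm
    have hmem : ⌊(n : ℝ) * r⌋ ∈ {beattySeq' s k | k} :=
      ⟨m, by rw [hs.beattySeq'_eq_beattySeq (by exact_mod_cast hm), beattySeq, h]; rfl⟩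
    rw [← compl_beattySeq hrs] at hmem
    exact hmem ⟨n, rfl⟩
  subst hm
  refine ⟨(strictMono_floor_natCast_mul_s7 hrs.lt.le).injective ?_, rfl⟩
  simpa using h

/-- No Nim-type move (decreasing exactly one coordinate by a positive amount,
keeping it nonnegative) maps `(⌊nα⌋, ⌊nβ⌋)` to a candidate P-position. -/
theorem stmt_7 (β : ℝ) (hirr : Irrational β) (hβ : 2 < β)
    (α : ℝ) (hα : α = β / (β - 1)) :
    ∀ n m : ℕ, ∀ t : ℤ, 0 < t →
      (t ≤ ⌊(n : ℝ) * α⌋ →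
        ¬((⌊(n : ℝ) * α⌋ - t, ⌊(n : ℝ) * β⌋) = (⌊(m : ℝ) * α⌋, ⌊(m : ℝ) * β⌋) ∨
          (⌊(n : ℝ) * α⌋ - t, ⌊(n : ℝ) * β⌋) = (⌊(m : ℝ) * β⌋, ⌊(m : ℝ) * α⌋))) ∧
      (t ≤ ⌊(n : ℝ) * β⌋ →
        ¬((⌊(n : ℝ) * α⌋, ⌊(n : ℝ) * β⌋ - t) = (⌊(m : ℝ) * α⌋, ⌊(m : ℝ) * β⌋) ∨
          (⌊(n : ℝ) * α⌋, ⌊(n : ℝ) * β⌋ - t) = (⌊(m : ℝ) * β⌋, ⌊(m : ℝ) * α⌋))) := by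
  have hαβ : α.HolderConjugate β :=
    ((Real.holderConjugate_iff_eq_conjExponent (by linarith)).2 hα).symm
  have hα_le_β : α ≤ β := by
    rw [hα, div_le_iff₀ (by linarith)]
    nlinarith
  have injα := (strictMono_floor_natCast_mul_s7 hαβ.lt.le).injective
  have injβ := (strictMono_floor_natCast_mul_s7 hαβ.symm.lt.le).injective
  have floor_α_le_β (k : ℕ) : ⌊(k : ℝ) * α⌋ ≤ ⌊(k : ℝ) * β⌋ :=
    Int.floor_le_floor (mul_le_mul_of_nonneg_left hα_le_β k.cast_nonneg)
  intro n m t ht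
  refine ⟨fun _ h => ?_, fun _ h => ?_⟩ <;> rcases h with h | h <;>
    simp only [Prod.mk.injEq] at h
  · obtain rfl : n = m := injβ h.2
    omega
  · have := floor_α_le_β n
    have := floor_α_le_β m
    omega
  · obtain rfl : n = m := injα h.1
    omega
  · obtain ⟨rfl, rfl⟩ := hαβ.floor_natCast_mul_eq_floor_natCast_mul hirr h.1
    simp only [CharP.cast_eq_zero, zero_mul, Int.floor_zero] at h
    omega
end

section
/- For irrational β > 2 and α = β/(β-1), if (x,y) satisfies x = ⌊nα⌋ and y = ⌊mα⌋ for positive integers m > n with y < ⌊nβ⌋, then there exists p < n and a move (x,y) → (⌊pα⌋, ⌊pβ⌋) with (x - ⌊pα⌋, y - ⌊pβ⌋) having both components positive and |(x - ⌊pα⌋) - (y - ⌊pβ⌋)| < ⌊β⌋. -/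
theorem stmt_9 (β : ℝ) (hirr : Irrational β) (hβ : 2 < β)
    (α : ℝ) (hα : α = β / (β - 1)) :
    ∀ n m : ℕ, 0 < n → n < m →
      ∀ x y : ℤ, x = ⌊(n : ℝ) * α⌋ → y = ⌊(m : ℝ) * α⌋ → y < ⌊(n : ℝ) * β⌋ →
      ∃ p : ℕ, p < n ∧ 0 < x - ⌊(p : ℝ) * α⌋ ∧ 0 < y - ⌊(p : ℝ) * β⌋ ∧
        |(x - ⌊(p : ℝ) * α⌋) - (y - ⌊(p : ℝ) * β⌋)| < ⌊β⌋ := by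
  intro n m hn hnm x y hx hy hlt
  have hα1 : 1 < α := by
    rw [hα, lt_div_iff₀ (by linarith)]; linarith
  have hβ1 : 1 < β := by linarith
  -- monotonicity of floors
  have mono : ∀ γ : ℝ, 1 < γ → ∀ p q : ℕ, p < q →
      ⌊(p:ℝ)*γ⌋ + 1 ≤ ⌊(q:ℝ)*γ⌋ := by
    intro γ hγ p q hpq
    have hq : (p:ℝ) + 1 ≤ (q:ℝ) := by exact_mod_cast hpq
    have h1 : (p:ℝ)*γ + 1 ≤ (q:ℝ)*γ := by nlinarith
    calc ⌊(p:ℝ)*γ⌋ + 1 = ⌊(p:ℝ)*γ + 1⌋ := by rw [Int.floor_add_one]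
      _ ≤ ⌊(q:ℝ)*γ⌋ := Int.floor_le_floor h1
  have hxy : x + 1 ≤ y := by rw [hx, hy]; exact mono α hα1 n m hnm
  set D : ℤ := y - x with hD
  have hD1 : 1 ≤ D := by omega
  -- the property
  classical
  let P : ℕ → Prop := fun q => ⌊(q:ℝ)*β⌋ - ⌊(q:ℝ)*α⌋ ≤ D
  haveI : DecidablePred P := fun q => inferInstanceAs (Decidable (_ ≤ _))
  have hP0 : P 0 := by
    simp only [P, Nat.cast_zero, zero_mul, Int.floor_zero]; omega
  have hPn : ¬ P n := by
    simp only [P, not_le]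
    rw [← hx]; omega
  set p := Nat.findGreatest P n with hp
  have hpn : p ≤ n := Nat.findGreatest_le n
  have hPp : P p := Nat.findGreatest_spec (Nat.zero_le n) hP0
  have hpn' : p < n := by
    rcases lt_or_eq_of_le hpn with h | h
    · exact h
    · exact absurd (h ▸ hPp) hPn
  have hnotP : ¬ P (p + 1) := Nat.findGreatest_is_greatest (Nat.lt_succ_self p) hpn'
  have hβfl : (2:ℤ) ≤ ⌊β⌋ := by
    rw [Int.le_floor]; exact_mod_cast le_of_lt hβ
  -- jump bound: ⌊(p+1)β⌋ ≤ ⌊pβ⌋ + ⌊β⌋ + 1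
  have hjumpβ : ⌊((p+1:ℕ):ℝ)*β⌋ ≤ ⌊(p:ℝ)*β⌋ + ⌊β⌋ + 1 := by
    have h1 : (p:ℝ)*β < (⌊(p:ℝ)*β⌋ : ℝ) + 1 := Int.lt_floor_add_one _
    have h2 : β < (⌊β⌋ : ℝ) + 1 := Int.lt_floor_add_one _
    have h3 : ((p+1:ℕ):ℝ)*β < ((⌊(p:ℝ)*β⌋ + ⌊β⌋ + 1 : ℤ) : ℝ) + 1 := by
      push_cast; nlinarith
    have h4 : ⌊((p+1:ℕ):ℝ)*β⌋ < ⌊(p:ℝ)*β⌋ + ⌊β⌋ + 2 := by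
      exact Int.floor_lt.mpr (by push_cast at h3 ⊢; linarith)
    omega
  have hjumpα : ⌊(p:ℝ)*α⌋ + 1 ≤ ⌊((p+1:ℕ):ℝ)*α⌋ := mono α hα1 p (p+1) (Nat.lt_succ_self p)
  have hgap : D + ⌊((p:ℝ)+1)*α⌋ < ⌊((p:ℝ)+1)*β⌋ := by
    simpa [P, not_le] using hnotP
  push_cast at hjumpβ hjumpα
  have hdp : ⌊(p:ℝ)*β⌋ - ⌊(p:ℝ)*α⌋ ≤ D := hPp
  have hs : 0 < x - ⌊(p:ℝ)*α⌋ := by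
    have := mono α hα1 p n hpn'
    omega
  refine ⟨p, hpn', hs, ?_, ?_⟩
  · -- t = y - ⌊pβ⌋ ≥ s > 0
    omega
  · rw [abs_lt]
    constructor <;> omega
end

section
/- For irrational β > 2 and α = β/(β-1), and for positive integers m > n, if ⌊mα⌋ < ⌊nβ⌋ then the extended-diagonal move from (⌊nα⌋, ⌊mα⌋) subtracting the vector (⌊nα⌋ - ⌊(n-1)α⌋, ⌊mα⌋ - ⌊(n-1)β⌋) lands on (⌊(n-1)α⌋, ⌊(n-1)β⌋) and is legal, i.e., both subtracted amounts are positive (when n ≥ 1 and ⌊mα⌋ > ⌊(n-1)β⌋) and their absolute difference is less than ⌊β⌋. -/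
/-- The "worst case" extended-diagonal move: from `(⌊nα⌋, ⌊mα⌋)` with `m > n ≥ 1`,
`⌊(n-1)β⌋ < ⌊mα⌋ < ⌊nβ⌋`, subtracting `(⌊nα⌋ - ⌊(n-1)α⌋, ⌊mα⌋ - ⌊(n-1)β⌋)` lands on
`(⌊(n-1)α⌋, ⌊(n-1)β⌋)` and is a legal (1B) move. -/
theorem stmt_13 (β : ℝ) (hirr : Irrational β) (hβ : 2 < β)
    (α : ℝ) (hα : α = β / (β - 1)) :
    ∀ n m : ℕ, 1 ≤ n → n < m →
      ⌊(m : ℝ) * α⌋ < ⌊(n : ℝ) * β⌋ →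
      ⌊((n : ℝ) - 1) * β⌋ < ⌊(m : ℝ) * α⌋ →
      (⌊(n : ℝ) * α⌋ - (⌊(n : ℝ) * α⌋ - ⌊((n : ℝ) - 1) * α⌋),
        ⌊(m : ℝ) * α⌋ - (⌊(m : ℝ) * α⌋ - ⌊((n : ℝ) - 1) * β⌋))
        = (⌊((n : ℝ) - 1) * α⌋, ⌊((n : ℝ) - 1) * β⌋) ∧
      0 < ⌊(n : ℝ) * α⌋ - ⌊((n : ℝ) - 1) * α⌋ ∧
      0 < ⌊(m : ℝ) * α⌋ - ⌊((n : ℝ) - 1) * β⌋ ∧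
      |(⌊(n : ℝ) * α⌋ - ⌊((n : ℝ) - 1) * α⌋) - (⌊(m : ℝ) * α⌋ - ⌊((n : ℝ) - 1) * β⌋)|
        < ⌊β⌋ := by
  intro n m hn hnm h1 h2
  have hβ1 : (1:ℝ) < β - 1 := by linarith
  have hα1 : 1 < α := by
    rw [hα, lt_div_iff₀ (by linarith)]; linarith
  have hα2 : α < 2 := by
    rw [hα, div_lt_iff₀ (by linarith)]; linarith
  -- floor differences for α
  have ha1 : ⌊((n : ℝ) - 1) * α⌋ + 1 ≤ ⌊(n : ℝ) * α⌋ := by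
    have h := Int.floor_le (((n : ℝ) - 1) * α)
    have : ((⌊((n : ℝ) - 1) * α⌋ + 1 : ℤ) : ℝ) ≤ (n : ℝ) * α := by
      push_cast; nlinarith
    exact Int.le_floor.mpr this
  have ha2 : ⌊(n : ℝ) * α⌋ ≤ ⌊((n : ℝ) - 1) * α⌋ + 2 := by
    have h := Int.lt_floor_add_one (((n : ℝ) - 1) * α)
    have : ⌊(n : ℝ) * α⌋ < ⌊((n : ℝ) - 1) * α⌋ + 2 + 1 := by
      apply Int.floor_lt.mpr
      push_cast
      nlinarith
    omega
  -- floor difference for β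
  have hb : ⌊(n : ℝ) * β⌋ ≤ ⌊((n : ℝ) - 1) * β⌋ + ⌊β⌋ + 1 := by
    have h1' := Int.lt_floor_add_one (((n : ℝ) - 1) * β)
    have h2' := Int.lt_floor_add_one β
    have : ⌊(n : ℝ) * β⌋ < ⌊((n : ℝ) - 1) * β⌋ + ⌊β⌋ + 1 + 1 := by
      apply Int.floor_lt.mpr
      push_cast
      nlinarith
    omega
  have hβfl : 2 ≤ ⌊β⌋ := by
    have : ((2 : ℤ) : ℝ) ≤ β := by norm_num; linarith
    exact Int.le_floor.mpr this
  refine ⟨by simp, by omega, by omega, ?_⟩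
  rw [abs_lt]
  omega
end
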